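/- arXiv:2605.18287 — 2 statements merged into one kernel-verified Lean document; each statement's English description precedes it below -/
import Mathlib

section
/- Let Σ ∈ ℝ^{N×N} be symmetric positive definite, let β > 0, let X = [c₁, …, c_D] ∈ ℝ^{N×D} have columns c_j, and let K = [μ₁, …, μ_D] ∈ ℝ^{N×D} have columns μ_c satisfying μ_cᵀ Σ⁻¹ μ_c = 1 for every c. Set Q = Σ⁻¹ X, define for each j, c the soft assignment q(c|j) = exp(−(β/2)(c_j − μ_c)ᵀ Σ⁻¹ (c_j − μ_c)) / Σ_{c′=1}^{D} exp(−(β/2)(c_j − μ_{c′})ᵀ Σ⁻¹ (c_j − μ_{c′})), set m_c = Σ_{j=1}^{D} q(c|j), assume m_c > 0, and define the updated cluster centers μ_c^{new} = (1/m_c) Σ_{j=1}^{D} q(c|j) c_j. Let S ∈ ℝ^{D×D} be the matrix obtained by applying the softmax over c to each row of β QᵀK, i.e., S_{jc} = exp(β (Qᵀ K)_{jc}) / Σ_{c′=1}^{D} exp(β (Qᵀ K)_{jc′}). Then the matrix of updated centers satisfies [μ₁^{new}, …, μ_D^{new}] = X · S · diag(m₁, …, m_D)⁻¹; that is, the iterative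 cluster-center update is exactly a softmax attention operation with queries Q = Σ⁻¹X, keys K, and values X. -/
open Matrix

/-- The iterative cluster-center update of the information-bottleneck soft
assignment is exactly a softmax attention operation with queries `Q = Σ⁻¹X`,
keys `K` and values `X`:
`[μ₁ⁿᵉʷ, …, μ_Dⁿᵉʷ] = X · Softmax_rows(β QᵀK) · diag(m₁, …, m_D)⁻¹`. -/
theorem cluster_update_eq_softmax_attention {N D : ℕ}
    (Sig : Matrix (Fin N) (Fin N) ℝ) (hpd : Sig.PosDef) (hsym : Sig.IsSymm)
    (β : ℝ) (hβ : 0 < β)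
    (X K : Matrix (Fin N) (Fin D) ℝ)
    -- columns of `X` and `K`
    (c : Fin D → (Fin N → ℝ)) (hc : ∀ j i, c j i = X i j)
    (μ : Fin D → (Fin N → ℝ)) (hμ : ∀ k i, μ k i = K i k)
    -- normalization `μ_cᵀ Σ⁻¹ μ_c = 1`
    (hnorm : ∀ k : Fin D, μ k ⬝ᵥ Sig⁻¹ *ᵥ μ k = 1)
    -- soft assignment `q(c|j)`
    (q : Fin D → Fin D → ℝ)
    (hq : ∀ (k j : Fin D),
      q k j = Real.exp (-(β / 2) * ((c j - μ k) ⬝ᵥ Sig⁻¹ *ᵥ (c j - μ k))) /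
        ∑ k', Real.exp (-(β / 2) * ((c j - μ k') ⬝ᵥ Sig⁻¹ *ᵥ (c j - μ k'))))
    -- cluster masses `m_c = Σ_j q(c|j) > 0`
    (m : Fin D → ℝ) (hm : ∀ k, m k = ∑ j, q k j) (hmpos : ∀ k, 0 < m k)
    -- updated centers `μ_cⁿᵉʷ = (1/m_c) Σ_j q(c|j) c_j`
    (μnew : Fin D → (Fin N → ℝ))
    (hμnew : ∀ k, μnew k = (1 / m k) • ∑ j, q k j • c j)
    -- row-wise softmax of `β QᵀK` with `Q = Σ⁻¹ X`
    (S : Matrix (Fin D) (Fin D) ℝ)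
    (hS : ∀ (j k : Fin D),
      S j k = Real.exp (β * ((Sig⁻¹ * X)ᵀ * K) j k) /
        ∑ k', Real.exp (β * ((Sig⁻¹ * X)ᵀ * K) j k')) :
    (Matrix.of fun i k => μnew k i) = X * S * (Matrix.diagonal m)⁻¹ := by
  have hAsymm : (Sig⁻¹)ᵀ = Sig⁻¹ := by
    rw [Matrix.transpose_nonsing_inv, hsym.eq]
  have hA : ∀ i l, Sig⁻¹ i l = Sig⁻¹ l i := by
    intro i l
    conv_rhs => rw [← hAsymm, Matrix.transpose_apply]
  have hdsymm : ∀ x y : Fin N → ℝ, x ⬝ᵥ Sig⁻¹ *ᵥ y = y ⬝ᵥ Sig⁻¹ *ᵥ x := by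
    intro x y
    simp only [dotProduct, Matrix.mulVec, dotProduct, Finset.mul_sum]
    rw [Finset.sum_comm]
    refine Finset.sum_congr rfl fun l _ => Finset.sum_congr rfl fun i _ => ?_
    rw [hA i l]; ring
  have hentry : ∀ j k : Fin D, ((Sig⁻¹ * X)ᵀ * K) j k = c j ⬝ᵥ Sig⁻¹ *ᵥ μ k := by
    intro j k
    simp only [Matrix.mul_apply, Matrix.transpose_apply, dotProduct,
      Matrix.mulVec, hc, hμ, Finset.sum_mul, Finset.mul_sum]
    rw [Finset.sum_comm]
    refine Finset.sum_congr rfl fun l _ => Finset.sum_congr rfl fun i _ => ?_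
    rw [hA i l]; ring
  have hquad : ∀ j k : Fin D,
      -(β / 2) * ((c j - μ k) ⬝ᵥ Sig⁻¹ *ᵥ (c j - μ k)) =
      (-(β / 2) * (c j ⬝ᵥ Sig⁻¹ *ᵥ c j) - β / 2) + β * (c j ⬝ᵥ Sig⁻¹ *ᵥ μ k) := by
    intro j k
    have h1 : (c j - μ k) ⬝ᵥ Sig⁻¹ *ᵥ (c j - μ k) =
        c j ⬝ᵥ Sig⁻¹ *ᵥ c j - 2 * (c j ⬝ᵥ Sig⁻¹ *ᵥ μ k) + 1 := by
      rw [sub_dotProduct, Matrix.mulVec_sub, dotProduct_sub,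
        dotProduct_sub, hdsymm (μ k) (c j), hnorm]
      ring
    rw [h1]; ring
  have hqS : ∀ j k : Fin D, q k j = S j k := by
    intro j k
    rw [hq, hS, hentry]
    have hrw : ∀ k' : Fin D,
        Real.exp (-(β / 2) * ((c j - μ k') ⬝ᵥ Sig⁻¹ *ᵥ (c j - μ k'))) =
        Real.exp (-(β / 2) * (c j ⬝ᵥ Sig⁻¹ *ᵥ c j) - β / 2) *
          Real.exp (β * (c j ⬝ᵥ Sig⁻¹ *ᵥ μ k')) := by
      intro k'; rw [← Real.exp_add, hquad]
    simp only [hrw, hentry, ← Finset.mul_sum]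
    rw [mul_div_mul_left]
    exact (Real.exp_pos _).ne'
  have hdet : IsUnit (Matrix.diagonal m).det := by
    rw [Matrix.det_diagonal]
    exact (Finset.prod_pos fun k _ => hmpos k).ne'.isUnit
  have key : (Matrix.of fun i k => μnew k i) * Matrix.diagonal m = X * S := by
    ext i k
    simp only [Matrix.mul_apply, Matrix.of_apply, Matrix.diagonal_apply,
      mul_ite, mul_zero, Finset.sum_ite_eq', Finset.mem_univ, if_true]
    rw [hμnew]
    simp only [Pi.smul_apply, Finset.sum_apply, smul_eq_mul]
    rw [one_div, mul_comm, ← mul_assoc, mul_inv_cancel₀ (hmpos k).ne', one_mul]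
    refine Finset.sum_congr rfl fun j _ => ?_
    rw [hqS j k, hc]; ring
  rw [← key, Matrix.mul_nonsing_inv_cancel_right _ _ hdet]
end

section
/- Let X, Z, S be nonempty finite types, let p be a probability mass function on X × S whose X-marginal p(x) is strictly positive for all x, and fix β > 0. For a family of conditional probability mass functions q(·|x) on Z (one for each x ∈ X) with q(z|x) > 0 for all x, z, define the marginal q(z) = Σ_x p(x) q(z|x), the decoder q(s|z) = (Σ_x p(x, s) q(z|x)) / q(z), the mutual informations I(X;Z) = Σ_{x,z} p(x) q(z|x) log( q(z|x) / q(z) ) and I(Z;S) = Σ_{z,s} q(z) q(s|z) log( q(s|z) / p_S(s) ) where p_S(s) = Σ_x p(x, s), and the Lagrangian L(q) = I(X;Z) − β I(Z;S). If q is a local minimizer of L over the set of strictly positive conditional families (with each q(·|x) constrained to sum to 1), then q satisfies the information-bottleneck self-consistent equations: for all x, z, q(z|x) = q(z) exp(−β D_KL(p(·|x) ‖ q(·|z))) / Z(x, β), where p(s|x) = p(x, s)/p(x), D_KL(p(·|x) ‖ q(·|z)) = Σ_s p(s|x) log( p(s|x) / q(s|z) ) (with the convention 0 log 0 = 0), and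 Z(x, β) = Σ_{z′} q(z′) exp(−β D_KL(p(·|x) ‖ q(·|z′))) is the normalizing partition function. -/
open scoped BigOperators

variable {X Z S : Type*} [Fintype X] [Fintype Z] [Fintype S]

/-- `X`-marginal `p(x) = Σ_s p(x, s)` of a joint pmf on `X × S`. -/
noncomputable def margX (p : X × S → ℝ) (x : X) : ℝ := ∑ s, p (x, s)

/-- `S`-marginal `p_S(s) = Σ_x p(x, s)` of a joint pmf on `X × S`. -/
noncomputable def margS (p : X × S → ℝ) (s : S) : ℝ := ∑ x, p (x, s)

/-- Marginal of the bottleneck variable: `q(z) = Σ_x p(x) q(z|x)`. -/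
noncomputable def margZ (p : X × S → ℝ) (r : X → Z → ℝ) (z : Z) : ℝ := ∑ x, margX p x * r x z

/-- The decoder `q(s|z) = (Σ_x p(x, s) q(z|x)) / q(z)`. -/
noncomputable def decoder (p : X × S → ℝ) (r : X → Z → ℝ) (z : Z) (s : S) : ℝ :=
  (∑ x, p (x, s) * r x z) / margZ p r z

/-- Mutual information `I(X;Z) = Σ_{x,z} p(x) q(z|x) log(q(z|x) / q(z))`. -/
noncomputable def mutualXZ (p : X × S → ℝ) (r : X → Z → ℝ) : ℝ :=
  ∑ x, ∑ z, margX p x * r x z * Real.log (r x z / margZ p r z)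

/-- Mutual information `I(Z;S) = Σ_{z,s} q(z) q(s|z) log(q(s|z) / p_S(s))`. -/
noncomputable def mutualZS (p : X × S → ℝ) (r : X → Z → ℝ) : ℝ :=
  ∑ z, ∑ s, margZ p r z * decoder p r z s * Real.log (decoder p r z s / margS p s)

/-- The information-bottleneck Lagrangian `L(q) = I(X;Z) − β I(Z;S)`. -/
noncomputable def ibLagrangian (p : X × S → ℝ) (β : ℝ) (r : X → Z → ℝ) : ℝ :=
  mutualXZ p r - β * mutualZS p r

/-- The constraint set of strictly positive conditional families: each
`q(·|x)` is strictly positive and sums to `1`. -/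
def condFamilies (X Z : Type*) [Fintype Z] : Set (X → Z → ℝ) :=
  {r | (∀ x z, 0 < r x z) ∧ ∀ x, ∑ z, r x z = 1}

/-- `D_KL(p(·|x) ‖ q(·|z)) = Σ_s p(s|x) log(p(s|x) / q(s|z))` where
`p(s|x) = p(x,s)/p(x)` (with the convention `0 log 0 = 0`, automatic here
since `Real.log 0 = 0` and multiplication by `0` kills the term). -/
noncomputable def klCond (p : X × S → ℝ) (r : X → Z → ℝ) (x : X) (z : Z) : ℝ :=
  ∑ s, (p (x, s) / margX p x) * Real.log ((p (x, s) / margX p x) / decoder p r z s)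

/-- The partition function `Z(x, β) = Σ_{z′} q(z′) exp(−β D_KL(p(·|x)‖q(·|z′)))`. -/
noncomputable def partitionFn (p : X × S → ℝ) (β : ℝ) (r : X → Z → ℝ) (x : X) : ℝ :=
  ∑ z', margZ p r z' * Real.exp (-β * klCond p r x z')

/-! Along a line `q + t • v` with `v = δ_x ⊗ (δ_z - δ_z')`, which stays in the constraint set for
small `t`, the Lagrangian is a sum of terms `φ (a + t c)` with `φ y = y log y`, because the
marginal `q(z)` and the joint `q(z, s)` depend linearly on `q`. At a local minimum the derivative
at `t = 0` vanishes, so the gradient of `L` is constant along each row `q(·|x)`. Up to a term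
depending only on `x`, that gradient is `p(x) (log (q(z|x) / q(z)) + β D_KL(p(·|x) ‖ q(·|z)))`;
hence `q(z|x) / (q(z) exp (-β D_KL(p(·|x) ‖ q(·|z))))` does not depend on `z`, and normalising
over `z` produces the partition function. -/

open Real Filter Topology Finset

theorem IsLocalMinOn.hasDerivAt_line_eq_zero {E : Type*} [AddCommGroup E] [Module ℝ E]
    [TopologicalSpace E] [ContinuousAdd E] [ContinuousSMul ℝ E] {f : E → ℝ} {s : Set E}
    {a v : E} {f' : ℝ} (hf : IsLocalMinOn f s a) (hs : ∀ᶠ t : ℝ in 𝓝 0, a + t • v ∈ s)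
    (hderiv : HasDerivAt (fun t : ℝ => f (a + t • v)) f' 0) : f' = 0 := by
  have hline : Tendsto (fun t : ℝ => a + t • v) (𝓝 0) (𝓝[s] a) := by
    refine tendsto_nhdsWithin_iff.2 ⟨?_, hs⟩
    have : Continuous fun t : ℝ => a + t • v := by fun_prop
    simpa using this.tendsto 0
  have hf' : IsMinFilter f (𝓝[s] a) ((fun t : ℝ => a + t • v) 0) := by
    simp only [zero_smul, add_zero]
    exact hf
  exact IsLocalMin.hasDerivAt_eq_zero
    (IsMinFilter.comp_tendsto (g := fun t : ℝ => a + t • v) hf' hline) hderiv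

theorem hasDerivAt_mul_log_line {a c : ℝ} (h : a ≠ 0 ∨ c = 0) :
    HasDerivAt (fun t : ℝ => (a + t * c) * log (a + t * c)) (c * (log a + 1)) 0 := by
  rcases h with ha | rfl
  · have hline : HasDerivAt (fun t : ℝ => a + t * c) c 0 := by
      simpa using ((hasDerivAt_id (0 : ℝ)).mul_const c).const_add a
    refine (hline.fun_mul (hline.log (by simpa using ha))).congr_deriv ?_
    simp only [zero_mul, add_zero]
    field_simp
  · simpa using hasDerivAt_const (0 : ℝ) (a * log a)

theorem eq_div_sum_of_div_eq {ι : Type*} [Fintype ι] {r w : ι → ℝ} (hw : ∀ i, 0 < w i)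
    (hr : ∑ i, r i = 1) (h : ∀ i j, r i / w i = r j / w j) (i : ι) :
    r i = w i / ∑ j, w j := by
  have hsum : r i / w i * ∑ j, w j = 1 := by
    rw [mul_sum, ← hr]
    exact sum_congr rfl fun j _ => by rw [h i j, div_mul_cancel₀ _ (hw j).ne']
  rw [eq_div_iff (sum_pos (fun j _ => hw j) ⟨i, mem_univ i⟩).ne']
  calc r i * ∑ j, w j = w i * (r i / w i * ∑ j, w j) := by field_simp [(hw i).ne']
    _ = w i := by rw [hsum, mul_one]

/-- The joint law `q(z, s) = Σ_x p(x, s) q(z|x)` of the bottleneck and the relevance variable. -/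
noncomputable def jointZS (p : X × S → ℝ) (r : X → Z → ℝ) (z : Z) (s : S) : ℝ :=
  ∑ x, p (x, s) * r x z

section Bottleneck

variable {p : X × S → ℝ} {r : X → Z → ℝ}

omit [Fintype Z] in
theorem margZ_pos [Nonempty X] (hpX : ∀ x, 0 < margX p x) (hr : ∀ x z, 0 < r x z) (z : Z) :
    0 < margZ p r z :=
  sum_pos (fun x _ => mul_pos (hpX x) (hr x z)) univ_nonempty

omit [Fintype Z] in
theorem sum_jointZS (z : Z) : ∑ s, jointZS p r z s = margZ p r z := by
  simp only [jointZS, margZ, margX, sum_mul]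
  exact sum_comm

omit [Fintype Z] in
theorem margZ_add_smul (v : X → Z → ℝ) (t : ℝ) (z : Z) :
    margZ p (r + t • v) z = margZ p r z + t * margZ p v z := by
  simp only [margZ, Pi.add_apply, Pi.smul_apply, smul_eq_mul, mul_add, sum_add_distrib, mul_sum]
  exact congrArg _ (sum_congr rfl fun _ _ => by ring)

omit [Fintype Z] [Fintype S] in
theorem jointZS_add_smul (v : X → Z → ℝ) (t : ℝ) (z : Z) (s : S) :
    jointZS p (r + t • v) z s = jointZS p r z s + t * jointZS p v z s := by
  simp only [jointZS, Pi.add_apply, Pi.smul_apply, smul_eq_mul, mul_add, sum_add_distrib, mul_sum]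
  exact congrArg _ (sum_congr rfl fun _ _ => by ring)

theorem sum_margZ_mul (v : X → Z → ℝ) (f : Z → ℝ) :
    ∑ z, margZ p v z * f z = ∑ x, ∑ z, v x z * (margX p x * f z) := by
  simp only [margZ, sum_mul]
  rw [sum_comm]
  exact sum_congr rfl fun x _ => sum_congr rfl fun z _ => by ring

theorem sum_jointZS_mul (v : X → Z → ℝ) (g : Z → S → ℝ) :
    ∑ z, ∑ s, jointZS p v z s * g z s = ∑ x, ∑ z, v x z * ∑ s, p (x, s) * g z s := by
  calc ∑ z, ∑ s, jointZS p v z s * g z s = ∑ z, ∑ x, ∑ s, v x z * (p (x, s) * g z s) := by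
        refine sum_congr rfl fun z _ => ?_
        simp only [jointZS, sum_mul]
        rw [sum_comm]
        exact sum_congr rfl fun x _ => sum_congr rfl fun s _ => by ring
    _ = ∑ x, ∑ z, v x z * ∑ s, p (x, s) * g z s := by
        rw [sum_comm]
        simp only [mul_sum]

omit [Fintype Z] [Fintype S] in
theorem margS_ne_zero_of_jointZS_ne_zero (hp0 : ∀ a, 0 ≤ p a) {z : Z} {s : S}
    (h : jointZS p r z s ≠ 0) : margS p s ≠ 0 := by
  contrapose! h
  have hzero := (sum_eq_zero_iff_of_nonneg fun x _ => hp0 (x, s)).1 h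
  simp [jointZS, hzero]

omit [Fintype Z] [Fintype S] in
theorem eq_zero_of_jointZS_eq_zero (hp0 : ∀ a, 0 ≤ p a) (hr : ∀ x z, 0 < r x z)
    {z : Z} {s : S} (h : jointZS p r z s = 0) (x : X) : p (x, s) = 0 := by
  have hzero := (sum_eq_zero_iff_of_nonneg fun x _ => mul_nonneg (hp0 (x, s)) (hr x z).le).1 h
  exact (mul_eq_zero.1 (hzero x (mem_univ x))).resolve_right (hr x z).ne'

theorem mutualXZ_eq [Nonempty X] (hpX : ∀ x, 0 < margX p x) (hr : ∀ x z, 0 < r x z) :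
    mutualXZ p r = ∑ x, ∑ z, margX p x * (r x z * log (r x z))
      - ∑ z, margZ p r z * log (margZ p r z) := by
  rw [sum_margZ_mul, ← sum_sub_distrib]
  refine sum_congr rfl fun x _ => ?_
  rw [← sum_sub_distrib]
  refine sum_congr rfl fun z _ => ?_
  rw [log_div (hr x z).ne' (margZ_pos hpX hr z).ne']
  ring

theorem mutualZS_eq [Nonempty X] (hp0 : ∀ a, 0 ≤ p a) (hpX : ∀ x, 0 < margX p x)
    (hr : ∀ x z, 0 < r x z) :
    mutualZS p r = ∑ z, ∑ s, jointZS p r z s * log (jointZS p r z s)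
      - ∑ z, margZ p r z * log (margZ p r z)
      - ∑ z, ∑ s, jointZS p r z s * log (margS p s) := by
  have hterm : ∀ z s, margZ p r z * decoder p r z s * log (decoder p r z s / margS p s)
      = jointZS p r z s * log (jointZS p r z s) - jointZS p r z s * log (margZ p r z)
        - jointZS p r z s * log (margS p s) := by
    intro z s
    have hm := (margZ_pos hpX hr z).ne'
    change margZ p r z * (jointZS p r z s / margZ p r z)
      * log (jointZS p r z s / margZ p r z / margS p s) = _
    rcases eq_or_ne (jointZS p r z s) 0 with h | h
    · simp [h]
    · have hS := margS_ne_zero_of_jointZS_ne_zero hp0 h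
      rw [mul_div_cancel₀ _ hm, div_div, log_div h (mul_ne_zero hm hS), log_mul hm hS]
      ring
  simp only [mutualZS, hterm, sum_sub_distrib, ← sum_mul, sum_jointZS]

theorem ibLagrangian_eq [Nonempty X] (hp0 : ∀ a, 0 ≤ p a) (hpX : ∀ x, 0 < margX p x)
    (hr : ∀ x z, 0 < r x z) (β : ℝ) :
    ibLagrangian p β r = ∑ x, ∑ z, margX p x * (r x z * log (r x z))
      - (1 - β) * ∑ z, margZ p r z * log (margZ p r z)
      - β * ∑ z, ∑ s, jointZS p r z s * log (jointZS p r z s)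
      + β * ∑ z, ∑ s, jointZS p r z s * log (margS p s) := by
  rw [ibLagrangian, mutualXZ_eq hpX hr, mutualZS_eq hp0 hpX hr]
  ring

theorem eventually_pos_add_smul (hr : ∀ x z, 0 < r x z) (v : X → Z → ℝ) :
    ∀ᶠ t : ℝ in 𝓝 0, ∀ x z, 0 < (r + t • v) x z := by
  refine eventually_all.2 fun x => eventually_all.2 fun z => ?_
  have hcont : ContinuousAt (fun t : ℝ => (r + t • v) x z) 0 := by
    simp only [Pi.add_apply, Pi.smul_apply, smul_eq_mul]
    fun_prop
  exact continuousAt_const.eventually_lt hcont (by simpa using hr x z)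

theorem eventually_add_smul_mem_condFamilies (hr : r ∈ condFamilies X Z) {v : X → Z → ℝ}
    (hv : ∀ x, ∑ z, v x z = 0) : ∀ᶠ t : ℝ in 𝓝 0, r + t • v ∈ condFamilies X Z := by
  filter_upwards [eventually_pos_add_smul hr.1 v] with t ht
  exact ⟨ht, fun x => by simp [sum_add_distrib, ← mul_sum, hr.2 x, hv x]⟩

/-- The partial derivative of `ibLagrangian p β` in the coordinate `r x z`. -/
noncomputable def ibGradient (p : X × S → ℝ) (β : ℝ) (r : X → Z → ℝ) (x : X) (z : Z) : ℝ :=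
  margX p x * (log (r x z) + 1) - (1 - β) * (margX p x * (log (margZ p r z) + 1))
    - β * ∑ s, p (x, s) * (log (jointZS p r z s) + 1) + β * ∑ s, p (x, s) * log (margS p s)

theorem hasDerivAt_ibLagrangian_line [Nonempty X] (hp0 : ∀ a, 0 ≤ p a)
    (hpX : ∀ x, 0 < margX p x) (hr : ∀ x z, 0 < r x z) (β : ℝ) (v : X → Z → ℝ) :
    HasDerivAt (fun t : ℝ => ibLagrangian p β (r + t • v))
      (∑ x, ∑ z, v x z * ibGradient p β r x z) 0 := by
  have hL : (fun t : ℝ => ibLagrangian p β (r + t • v)) =ᶠ[𝓝 0] fun t =>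
      ∑ x, ∑ z, margX p x * ((r x z + t * v x z) * log (r x z + t * v x z))
      - (1 - β) * ∑ z, (margZ p r z + t * margZ p v z) * log (margZ p r z + t * margZ p v z)
      - β * ∑ z, ∑ s, (jointZS p r z s + t * jointZS p v z s)
          * log (jointZS p r z s + t * jointZS p v z s)
      + β * ∑ z, ∑ s, (jointZS p r z s + t * jointZS p v z s) * log (margS p s) := by
    filter_upwards [eventually_pos_add_smul hr v] with t ht
    simp only [ibLagrangian_eq hp0 hpX ht, margZ_add_smul, jointZS_add_smul, Pi.add_apply,
      Pi.smul_apply, smul_eq_mul]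
  have hXZ := HasDerivAt.fun_sum fun x (_ : x ∈ univ) => HasDerivAt.fun_sum fun z (_ : z ∈ univ) =>
    (hasDerivAt_mul_log_line (Or.inl (hr x z).ne') (c := v x z)).const_mul (margX p x)
  have hZ := HasDerivAt.fun_sum fun z (_ : z ∈ univ) =>
    hasDerivAt_mul_log_line (Or.inl (margZ_pos hpX hr z).ne') (c := margZ p v z)
  have hZS := HasDerivAt.fun_sum fun z (_ : z ∈ univ) => HasDerivAt.fun_sum fun s (_ : s ∈ univ) =>
    hasDerivAt_mul_log_line (a := jointZS p r z s) (c := jointZS p v z s)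
      ((eq_or_ne (jointZS p r z s) 0).symm.imp_right fun h =>
        by simp [jointZS, eq_zero_of_jointZS_eq_zero hp0 hr h])
  have hS := HasDerivAt.fun_sum fun z (_ : z ∈ univ) => HasDerivAt.fun_sum fun s (_ : s ∈ univ) =>
    ((hasDerivAt_mul_const (x := 0) (jointZS p v z s)).const_add (jointZS p r z s)).mul_const
      (log (margS p s))
  refine HasDerivAt.congr_of_eventuallyEq ?_ hL
  convert ((hXZ.fun_sub (hZ.const_mul (1 - β))).fun_sub (hZS.const_mul β)).fun_add
    (hS.const_mul β) using 1
  rw [sum_margZ_mul, sum_jointZS_mul, sum_jointZS_mul]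
  simp only [mul_sum (a := 1 - β), mul_sum (a := β), ← sum_sub_distrib, ← sum_add_distrib]
  exact sum_congr rfl fun x _ => sum_congr rfl fun z _ => by rw [ibGradient]; ring

theorem ibGradient_eq_of_isLocalMinOn [Nonempty X] (hp0 : ∀ a, 0 ≤ p a)
    (hpX : ∀ x, 0 < margX p x) {β : ℝ} (hr : r ∈ condFamilies X Z)
    (hmin : IsLocalMinOn (ibLagrangian p β) (condFamilies X Z) r) (x : X) (z z' : Z) :
    ibGradient p β r x z = ibGradient p β r x z' := by
  classical
  set v : X → Z → ℝ := Pi.single x (Pi.single z 1 - Pi.single z' 1)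
  have hv : ∀ x', ∑ z'', v x' z'' = 0 := by
    intro x'
    rcases eq_or_ne x' x with rfl | hx
    · simp [v]
    · simp [v, hx]
  have hderiv := hmin.hasDerivAt_line_eq_zero (eventually_add_smul_mem_condFamilies hr hv)
    (hasDerivAt_ibLagrangian_line hp0 hpX hr.1 β v)
  have hsum : ∑ x', ∑ z'', v x' z'' * ibGradient p β r x' z'' =
      ibGradient p β r x z - ibGradient p β r x z' := by
    rw [Fintype.sum_eq_single x fun x' hx => by simp [v, hx]]
    simp [v, sub_mul, sum_sub_distrib, Pi.single_apply]
  linarith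

omit [Fintype Z] in
theorem margX_mul_klCond [Nonempty X] (hp0 : ∀ a, 0 ≤ p a) (hpX : ∀ x, 0 < margX p x)
    (hr : ∀ x z, 0 < r x z) (x : X) (z : Z) :
    margX p x * klCond p r x z = ∑ s, p (x, s) * log (p (x, s) / margX p x)
      - ∑ s, p (x, s) * log (jointZS p r z s) + margX p x * log (margZ p r z) := by
  have hm := (margZ_pos hpX hr z).ne'
  have hpx := (hpX x).ne'
  rw [klCond, mul_sum, margX, sum_mul, ← sum_sub_distrib, ← sum_add_distrib, ← margX]
  refine sum_congr rfl fun s _ => ?_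
  rcases eq_or_ne (p (x, s)) 0 with hps | hps
  · simp [hps]
  have hJ : jointZS p r z s ≠ 0 := fun h => hps (eq_zero_of_jointZS_eq_zero hp0 hr h x)
  change _ * (_ * log (_ / (jointZS p r z s / margZ p r z))) = _
  rw [log_div (div_ne_zero hps hpx) (div_ne_zero hJ hm), log_div hJ hm]
  field_simp
  ring

omit [Fintype Z] in
theorem ibGradient_eq [Nonempty X] (hp0 : ∀ a, 0 ≤ p a) (hpX : ∀ x, 0 < margX p x)
    (hr : ∀ x z, 0 < r x z) (β : ℝ) (x : X) (z : Z) :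
    ibGradient p β r x z = margX p x * (log (r x z) - log (margZ p r z) + β * klCond p r x z)
      + β * ∑ s, p (x, s) * (log (margS p s) - log (p (x, s) / margX p x)) := by
  have hsum : ∑ s, p (x, s) = margX p x := rfl
  simp only [ibGradient, mul_add, mul_sub, mul_one, sum_add_distrib, sum_sub_distrib, hsum]
  linear_combination -β * margX_mul_klCond hp0 hpX hr x z

theorem div_margZ_mul_exp_eq_of_isLocalMinOn [Nonempty X] (hp0 : ∀ a, 0 ≤ p a)
    (hpX : ∀ x, 0 < margX p x) {β : ℝ} (hr : r ∈ condFamilies X Z)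
    (hmin : IsLocalMinOn (ibLagrangian p β) (condFamilies X Z) r) (x : X) (z z' : Z) :
    r x z / (margZ p r z * exp (-β * klCond p r x z))
      = r x z' / (margZ p r z' * exp (-β * klCond p r x z')) := by
  have hG := ibGradient_eq_of_isLocalMinOn hp0 hpX hr hmin x z z'
  rw [ibGradient_eq hp0 hpX hr.1, ibGradient_eq hp0 hpX hr.1, add_left_inj] at hG
  have hexp : ∀ z, r x z / (margZ p r z * exp (-β * klCond p r x z))
      = exp (log (r x z) - log (margZ p r z) + β * klCond p r x z) := fun z => by
    rw [exp_add, exp_sub, exp_log (hr.1 x z), exp_log (margZ_pos hpX hr.1 z), neg_mul, exp_neg]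
    field_simp
  rw [hexp, hexp, mul_left_cancel₀ (hpX x).ne' hG]

end Bottleneck

theorem ib_local_min_self_consistent_general
    {X Z S : Type*} [Fintype X] [Fintype Z] [Fintype S]
    (p : X × S → ℝ) (hp0 : ∀ a, 0 ≤ p a)
    (hpX : ∀ x, 0 < margX p x)
    (β : ℝ)
    (q : X → Z → ℝ) (hq : q ∈ condFamilies X Z)
    (hmin : IsLocalMinOn (ibLagrangian p β) (condFamilies X Z) q) :
    ∀ x z, q x z = margZ p q z * Real.exp (-β * klCond p q x z) / partitionFn p β q x := by
  intro x
  have : Nonempty X := ⟨x⟩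
  exact eq_div_sum_of_div_eq (fun z => mul_pos (margZ_pos hpX hq.1 z) (exp_pos _)) (hq.2 x)
    (div_margZ_mul_exp_eq_of_isLocalMinOn hp0 hpX hq hmin x)

/-- A local minimizer of the information-bottleneck Lagrangian over the set of
strictly positive conditional families satisfies the IB self-consistent
equations `q(z|x) = q(z) exp(−β D_KL(p(·|x)‖q(·|z))) / Z(x, β)`. -/
theorem ib_local_min_self_consistent
    {X Z S : Type*} [Fintype X] [Fintype Z] [Fintype S]
    [Nonempty X] [Nonempty Z] [Nonempty S]
    (p : X × S → ℝ) (hp0 : ∀ a, 0 ≤ p a) (hp1 : ∑ a, p a = 1)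
    (hpX : ∀ x, 0 < margX p x)
    (β : ℝ) (hβ : 0 < β)
    (q : X → Z → ℝ) (hq : q ∈ condFamilies X Z)
    (hmin : IsLocalMinOn (ibLagrangian p β) (condFamilies X Z) q) :
    ∀ x z, q x z = margZ p q z * Real.exp (-β * klCond p q x z) / partitionFn p β q x :=
  ib_local_min_self_consistent_general p hp0 hpX β q hq hmin
end
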